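/- arXiv:1505.05900 — 6 statements merged into one kernel-verified Lean document; each statement's English description precedes it below -/
import Mathlib

section
/- Let K > 0 and let x, y, z be non-negative reals with x + y + z = 12K. Let α₁, α₂ be reals with 0 < α₂, α₂ < α₁ < (3/2)α₂. If 6(α₁ − α₂)K − x·α₂ ≥ z·(α₁ − α₂) and 6α₁K − y·α₂ ≥ z·(α₁ − α₂), then x = 0, y = 6K, and z = 6K. -/
/-- Arithmetic core of the round-down hardness proof, case `α₁ < (3/2)α₂`:
if `x + y + z = 12K` with `x, y, z ≥ 0`, `0 < α₂ < α₁ < (3/2)α₂`, and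
`6(α₁ − α₂)K − xα₂ ≥ z(α₁ − α₂)` and `6α₁K − yα₂ ≥ z(α₁ − α₂)`,
then `x = 0`, `y = 6K`, and `z = 6K`. -/
theorem roundDown_case2 (K x y z α₁ α₂ : ℝ) (hK : 0 < K)
    (hx : 0 ≤ x) (hy : 0 ≤ y) (hz : 0 ≤ z) (hsum : x + y + z = 12 * K)
    (hα₂ : 0 < α₂) (hα : α₂ < α₁) (h32 : α₁ < (3 / 2) * α₂)
    (h1 : 6 * (α₁ - α₂) * K - x * α₂ ≥ z * (α₁ - α₂))
    (h2 : 6 * α₁ * K - y * α₂ ≥ z * (α₁ - α₂)) :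
    x = 0 ∧ y = 6 * K ∧ z = 6 * K := by
  have hz6 : z ≥ 6 * K := by nlinarith [mul_pos hα₂ hK]
  have hx0 : x = 0 := by nlinarith [mul_nonneg hx hα₂.le, sub_pos.mpr hα]
  have hz6' : z ≤ 6 * K := by nlinarith [sub_pos.mpr hα]
  have hzz : z = 6 * K := le_antisymm hz6' hz6
  exact ⟨hx0, by linarith, hzz⟩
end

section
/- Let K > 0 and let x, y be non-negative reals. Consider candidates p, a, b where (without manipulator influence on the a-vs-b contest) p ties against both a and b, a beats b by margin 2K among non-manipulators, and the manipulators contribute margin 2x − 2y to a over b (x = weight voting (p,a,b), y = weight voting (p,b,a)). For α ∈ [0,1), p is a Copeland^α co-winner if and only if 2K + 2x − 2y = 0, i.e., y − x = K. -/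
/-- Copeland^α hardness core for 3 candidates: `p` ties both pairwise contests
(score `2α`); the margin of `a` over `b` is `D = 2K + 2x − 2y` (non-manipulators
give `a` a margin `2K`, manipulators of weight `x` vote `(p,a,b)` and of weight `y`
vote `(p,b,a)`). For `0 ≤ α < 1`, `p` is a Copeland^α co-winner iff `y − x = K`. -/
theorem copeland_alpha_core (K x y α : ℝ) (hK : 0 < K)
    (hx : 0 ≤ x) (hy : 0 ≤ y) (hα0 : 0 ≤ α) (hα1 : α < 1) :
    (((if 0 < 2 * K + 2 * x - 2 * y then (1 : ℝ)
        else if 2 * K + 2 * x - 2 * y = 0 then α else 0) + α ≤ 2 * α) ∧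
     ((if 2 * K + 2 * x - 2 * y < 0 then (1 : ℝ)
        else if 2 * K + 2 * x - 2 * y = 0 then α else 0) + α ≤ 2 * α)) ↔
    y - x = K := by
  constructor
  · rintro ⟨h1, h2⟩
    by_contra hne
    rcases lt_trichotomy (2 * K + 2 * x - 2 * y) 0 with hlt | heq | hgt
    · rw [if_pos hlt] at h2; linarith
    · exact hne (by linarith)
    · rw [if_pos hgt] at h1; linarith
  · intro h
    have hD : 2 * K + 2 * x - 2 * y = 0 := by linarith
    simp only [hD, lt_irrefl, if_false, if_true, lt_self_iff_false, if_pos rfl]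
    constructor <;> linarith
end

section
/- In a maximin election with weighted voters, if W is any set of (possibly top-truncated) manipulator ballots each ranking candidate p first, and W together with the fixed non-manipulator profile S makes p a co-winner, then replacing every ballot in W with the top-truncated ballot (p) (ranking only p, leaving all others unranked and tied below p) also makes p a co-winner. Consequently, p can be made a maximin co-winner by some manipulator ballots iff all manipulators voting (p) makes p a co-winner. -/
variable {C : Type*}

/-- Whether the top-truncated ballot `l` (given by its ranked prefix, a duplicate-free
list) prefers `c` to `c'`: `c` must be ranked, and `c'` is either unranked or ranked later. -/
def prefB [DecidableEq C] (l : List C) (c c' : C) : Bool :=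
  decide (c ∈ l) && (!(decide (c' ∈ l)) || decide (l.idxOf c < l.idxOf c'))

/-- Weighted pairwise support: total weight of ballots in `P` preferring `c` to `c'`. -/
def pairN [DecidableEq C] (P : List (ℕ × List C)) (c c' : C) : ℕ :=
  (P.map (fun wb => if prefB wb.2 c c' then wb.1 else 0)).sum

/-- Maximin score of `c` (in `ℕ∞`): the minimum over all other candidates `c'`
of the weight preferring `c` to `c'`. -/
noncomputable def maximinScore [Fintype C] [DecidableEq C] (P : List (ℕ × List C)) (c : C) : ℕ∞ :=
  (Finset.univ.erase c).inf (fun c' => (pairN P c c' : ℕ∞))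

/-- `p` is a maximin co-winner of the weighted profile `P`. -/
def MaximinCoWinner [Fintype C] [DecidableEq C] (P : List (ℕ × List C)) (p : C) : Prop :=
  ∀ c, maximinScore P c ≤ maximinScore P p

/-!
The ballot `(p)` gives `p` the full weight of the ballot against every rival, the most any
ballot of that weight can give, and gives no other candidate support against anyone. So
replacing ballots by `(p)` while keeping their weights can only raise the maximin score of `p`
and lower that of every other candidate.
-/

def singletonBallots (p : C) (W : List (ℕ × List C)) : List (ℕ × List C) :=
  W.map fun wb => (wb.1, [p])

section DecidableEq

variable [DecidableEq C]

@[simp]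
lemma pairN_append (A B : List (ℕ × List C)) (c c' : C) :
    pairN (A ++ B) c c' = pairN A c c' + pairN B c c' := by
  simp [pairN]

lemma pairN_le_sum_weights (P : List (ℕ × List C)) (c c' : C) :
    pairN P c c' ≤ (P.map Prod.fst).sum :=
  List.sum_le_sum fun wb _ => by split <;> simp

lemma pairN_singletonBallots_of_ne {p c : C} (hc : c ≠ p) (W : List (ℕ × List C)) (c' : C) :
    pairN (singletonBallots p W) c c' = 0 := by
  simp [pairN, singletonBallots, prefB, Function.comp_def, hc]

lemma pairN_singletonBallots_self {p c' : C} (hc' : c' ≠ p) (W : List (ℕ × List C)) :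
    pairN (singletonBallots p W) p c' = (W.map Prod.fst).sum := by
  simp [pairN, singletonBallots, prefB, Function.comp_def, hc']

variable [Fintype C]

lemma maximinScore_le_maximinScore {P Q : List (ℕ × List C)} {c : C}
    (h : ∀ c' ≠ c, pairN P c c' ≤ pairN Q c c') : maximinScore P c ≤ maximinScore Q c :=
  Finset.inf_mono_fun fun c' hc' => by exact_mod_cast h c' (Finset.ne_of_mem_erase hc')

lemma maximinScore_singletonBallots_le {p c : C} (hc : c ≠ p) (S W W' : List (ℕ × List C)) :
    maximinScore (S ++ singletonBallots p W) c ≤ maximinScore (S ++ W') c :=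
  maximinScore_le_maximinScore fun c' _ => by simp [pairN_singletonBallots_of_ne hc]

lemma maximinScore_le_singletonBallots (p : C) {S W W' : List (ℕ × List C)}
    (hw : W'.map Prod.fst = W.map Prod.fst) :
    maximinScore (S ++ W') p ≤ maximinScore (S ++ singletonBallots p W) p :=
  maximinScore_le_maximinScore fun c' hc' => by
    rw [pairN_append, pairN_append, pairN_singletonBallots_self hc', ← hw]
    exact Nat.add_le_add_left (pairN_le_sum_weights W' p c') _

lemma MaximinCoWinner.to_singletonBallots {p : C} {S W W' : List (ℕ × List C)}
    (hw : W'.map Prod.fst = W.map Prod.fst) (h : MaximinCoWinner (S ++ W') p) :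
    MaximinCoWinner (S ++ singletonBallots p W) p := fun c => by
  rcases eq_or_ne c p with rfl | hc
  · exact le_rfl
  · calc maximinScore (S ++ singletonBallots p W) c
        ≤ maximinScore (S ++ W') c := maximinScore_singletonBallots_le hc S W W'
      _ ≤ maximinScore (S ++ W') p := h c
      _ ≤ maximinScore (S ++ singletonBallots p W) p := maximinScore_le_singletonBallots p hw

end DecidableEq

theorem maximin_toptruncated_general [Fintype C] [DecidableEq C] (p : C)
    (S W : List (ℕ × List C)) :
    (MaximinCoWinner (S ++ W) p →
      MaximinCoWinner (S ++ W.map (fun wb => (wb.1, [p]))) p) ∧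
    ((∃ W' : List (ℕ × List C), W'.map Prod.fst = W.map Prod.fst ∧
        (∀ wb ∈ W', wb.2.Nodup) ∧ MaximinCoWinner (S ++ W') p) ↔
      MaximinCoWinner (S ++ W.map (fun wb => (wb.1, [p]))) p) := by
  refine ⟨MaximinCoWinner.to_singletonBallots rfl,
    fun ⟨W', hw, _, h⟩ => h.to_singletonBallots hw,
    fun h => ⟨singletonBallots p W, ?_, ?_, h⟩⟩
  · simp [singletonBallots, Function.comp_def]
  · intro wb hwb
    obtain ⟨_, -, rfl⟩ := List.mem_map.mp hwb
    exact List.nodup_singleton p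

/-- Maximin with top-truncated ballots: if the manipulator ballots `W` all rank `p`
first and make `p` a co-winner (together with the fixed profile `S`), then replacing
every ballot in `W` by the ballot `(p)` also makes `p` a co-winner. Consequently, `p`
can be made a co-winner by some (top-truncated) manipulator ballots iff all manipulators
voting `(p)` makes `p` a co-winner. -/
theorem maximin_toptruncated [Fintype C] [DecidableEq C] (p : C)
    (S W : List (ℕ × List C))
    (hW : ∀ wb ∈ W, wb.2.Nodup ∧ wb.2.head? = some p) :
    (MaximinCoWinner (S ++ W) p →
      MaximinCoWinner (S ++ W.map (fun wb => (wb.1, [p]))) p) ∧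
    ((∃ W' : List (ℕ × List C), W'.map Prod.fst = W.map Prod.fst ∧
        (∀ wb ∈ W', wb.2.Nodup) ∧ MaximinCoWinner (S ++ W') p) ↔
      MaximinCoWinner (S ++ W.map (fun wb => (wb.1, [p]))) p) :=
  maximin_toptruncated_general p S W
end

section
/- Let F be a voting rule that assigns each candidate a numerical score from a profile of ballots and elects the candidate(s) with maximum score, and suppose F is monotone: if a voter changes their ballot from ≻ to ≻' such that for a candidate a, {b : a ≻ b} ⊆ {b : a ≻' b}, then a's score does not decrease. Then for any disliked candidate h: if there exists a set W of top-truncated manipulator ballots such that (S ∪ W) elects some winner c₁ ≠ h, then the set W' obtained by completing each ballot in W into a full linear order with c₁ first and h last also yields a profile (S ∪ W') in which h is not a winner. -/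
/-- Destructive manipulation and monotone score-based rules: let `score` assign each
candidate a numerical score from a weighted profile of ballots (binary preference
relations), electing the candidates of maximum score, and suppose it is monotone:
improving candidate `a`'s beaten set in a single ballot does not decrease `a`'s score.
If the top-truncated manipulator ballots `W` (with non-manipulators `S`) elect a winner
`c₁ ≠ h` (so `h` is not a winner), then completing each ballot of `W` into `W'` with
`c₁` first and `h` last (so `c₁`'s beaten set grows and `h`'s shrinks) again yields a
profile in which `h` is not a winner. -/
theorem monotone_destructive {C : Type*}
    (score : List (ℕ × (C → C → Prop)) → C → ℝ)
    (hmono : ∀ (P₁ P₂ : List (ℕ × (C → C → Prop))) (w : ℕ)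
        (b b' : C → C → Prop) (a : C),
        (∀ x, b a x → b' a x) →
        score (P₁ ++ (w, b) :: P₂) a ≤ score (P₁ ++ (w, b') :: P₂) a)
    (S W W' : List (ℕ × (C → C → Prop))) (c₁ h : C) (hne : c₁ ≠ h)
    (hlen : W.length = W'.length)
    (hrepl : ∀ (i : ℕ) (hi : i < W.length) (hi' : i < W'.length),
        (W.get ⟨i, hi⟩).1 = (W'.get ⟨i, hi'⟩).1 ∧
        (∀ x, (W.get ⟨i, hi⟩).2 c₁ x → (W'.get ⟨i, hi'⟩).2 c₁ x) ∧
        (∀ x, (W'.get ⟨i, hi'⟩).2 h x → (W.get ⟨i, hi⟩).2 h x))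
    (hwin : ∀ c, score (S ++ W) c ≤ score (S ++ W) c₁)
    (hnotwin : score (S ++ W) h < score (S ++ W) c₁) :
    ¬ (∀ c, score (S ++ W') c ≤ score (S ++ W') h) := by
  have key : ∀ (V V' : List (ℕ × (C → C → Prop))), V.length = V'.length →
      (∀ (i : ℕ) (hi : i < V.length) (hi' : i < V'.length),
        (V.get ⟨i, hi⟩).1 = (V'.get ⟨i, hi'⟩).1 ∧
        (∀ x, (V.get ⟨i, hi⟩).2 c₁ x → (V'.get ⟨i, hi'⟩).2 c₁ x) ∧
        (∀ x, (V'.get ⟨i, hi'⟩).2 h x → (V.get ⟨i, hi⟩).2 h x)) →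
      ∀ P, score (P ++ V) c₁ ≤ score (P ++ V') c₁ ∧
           score (P ++ V') h ≤ score (P ++ V) h := by
    intro V
    induction V with
    | nil =>
      intro V' hl _ P
      cases V' with
      | nil => exact ⟨le_refl _, le_refl _⟩
      | cons a t => simp at hl
    | cons wb T ih =>
      intro V' hl hr P
      cases V' with
      | nil => simp at hl
      | cons wb' T' =>
        obtain ⟨hw, hc, hh⟩ := hr 0 (by simp) (by simp)
        simp only [List.get] at hw hc hh
        obtain ⟨w, b⟩ := wb
        obtain ⟨w', b'⟩ := wb'
        simp only at hw hc hh
        subst hw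
        have hl' : T.length = T'.length := by simpa using hl
        have hr' : ∀ (i : ℕ) (hi : i < T.length) (hi' : i < T'.length),
            (T.get ⟨i, hi⟩).1 = (T'.get ⟨i, hi'⟩).1 ∧
            (∀ x, (T.get ⟨i, hi⟩).2 c₁ x → (T'.get ⟨i, hi'⟩).2 c₁ x) ∧
            (∀ x, (T'.get ⟨i, hi'⟩).2 h x → (T.get ⟨i, hi⟩).2 h x) := by
          intro i hi hi'
          exact hr (i + 1) (by simpa using Nat.succ_lt_succ hi)
            (by simpa using Nat.succ_lt_succ hi')
        have step1 : score (P ++ (w, b) :: T) c₁ ≤ score (P ++ (w, b') :: T) c₁ :=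
          hmono P T w b b' c₁ hc
        have step2 : score (P ++ (w, b') :: T') h ≤ score (P ++ (w, b) :: T') h :=
          hmono P T' w b' b h hh
        have tail := ih T' hl' hr' (P ++ [(w, b')])
        have tail2 := ih T' hl' hr' (P ++ [(w, b)])
        rw [List.append_cons P (w, b') T, List.append_cons P (w, b') T'] at *
        rw [List.append_cons P (w, b) T, List.append_cons P (w, b) T'] at *
        constructor
        · exact le_trans step1 tail.1
        · exact le_trans step2 tail2.2
  intro habs
  obtain ⟨h1, h2⟩ := key W W' hlen hrepl S
  have := habs c₁
  linarith
end

section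
/- In an eliminate(veto) election (iteratively eliminate the candidate with the fewest veto points, i.e., most last-place weight), suppose a set W of top-truncated manipulator ballots together with non-manipulator ballots S produces the elimination order e = (c₁, c₂, ..., c_m = p). Then replacing every ballot in W by the complete linear order c_m ≻ c_{m−1} ≻ ... ≻ c₁ produces the same elimination order e. Hence any constructive manipulation achievable with top-truncated ballots in eliminate(veto) (unique winner model) is achievable with complete ballots. -/
/-!
At stage `i` the surviving candidates are exactly those at positions `≥ i` of `e`, so the
complete ballot `e.reverse` ranks them in reverse order of elimination and vetoes exactly the
candidate `e[i]` eliminated at that stage. Replacing `W` by copies of this ballot therefore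
lowers the contribution of `W` to the score of `e[i]` to `0` and raises its contribution to
every other survivor to the full weight of `W`, so `e[i]` remains a minimiser.
-/

variable {C : Type*}

/-- `c` is vetoed (placed in the bottom tie) by the top-truncated ballot `l`
restricted to the surviving candidates `A`: `l` prefers no other surviving
candidate below `c`.  (A ballot all of whose listed candidates are eliminated
vetoes every surviving candidate, which has the same effect as ignoring it.) -/
def vetoedB [DecidableEq C] (l : List C) (A : Finset C) (c : C) : Bool :=
  decide (∀ c' ∈ A, c' ≠ c → ¬ (prefB l c c' = true))

/-- Veto score of `c` among surviving candidates `A`: total weight of ballots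
that do not veto `c`.  The candidate with the lowest veto score is eliminated. -/
def vetoScore [DecidableEq C] (P : List (ℕ × List C)) (A : Finset C) (c : C) : ℕ :=
  (P.map fun wb => if vetoedB wb.2 A c then 0 else wb.1).sum

/-- `e` is an elimination order of eliminate(veto) on the weighted profile `P`:
it enumerates all candidates without repetition, and at each stage the eliminated
candidate has minimal veto score among the surviving candidates. -/
def IsElimOrder [Fintype C] [DecidableEq C] (P : List (ℕ × List C)) (e : List C) : Prop :=
  e.Nodup ∧ (∀ c : C, c ∈ e) ∧
    ∀ (i : ℕ) (hi : i < e.length), ∀ c ∈ Finset.univ \ (e.take i).toFinset,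
      vetoScore P (Finset.univ \ (e.take i).toFinset) (e.get ⟨i, hi⟩) ≤
        vetoScore P (Finset.univ \ (e.take i).toFinset) c

namespace List

variable {α : Type*} [DecidableEq α]

theorem Nodup.idxOf_reverse {l : List α} (hl : l.Nodup) {x : α} (hx : x ∈ l) :
    l.reverse.idxOf x = l.length - 1 - l.idxOf x := by
  have hlt : l.idxOf x < l.length := idxOf_lt_length_iff.2 hx
  have hrev : l.length - 1 - l.idxOf x < l.reverse.length := by
    rw [length_reverse]; omega
  have hget : l.reverse[l.length - 1 - l.idxOf x] = x := by
    rw [getElem_reverse]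
    simp only [show l.length - 1 - (l.length - 1 - l.idxOf x) = l.idxOf x by omega]
    exact getElem_idxOf hlt
  conv_lhs => rw [← hget]
  exact (nodup_reverse.2 hl).idxOf_getElem _ hrev

theorem Nodup.idxOf_reverse_le_iff {l : List α} (hl : l.Nodup) {x y : α} (hx : x ∈ l)
    (hy : y ∈ l) : l.reverse.idxOf x ≤ l.reverse.idxOf y ↔ l.idxOf y ≤ l.idxOf x := by
  have := idxOf_lt_length_iff.2 hx
  have := idxOf_lt_length_iff.2 hy
  rw [hl.idxOf_reverse hx, hl.idxOf_reverse hy]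
  omega

end List

section Ballots

variable [DecidableEq C]

theorem prefB_iff_idxOf_lt {l : List C} {c c' : C} (hc : c ∈ l) (hc' : c' ∈ l) :
    prefB l c c' = true ↔ l.idxOf c < l.idxOf c' := by
  simp [prefB, hc, hc']

theorem vetoedB_iff_forall_idxOf_le {l : List C} {A : Finset C} {c : C} (hc : c ∈ l)
    (hA : ∀ x ∈ A, x ∈ l) : vetoedB l A c = true ↔ ∀ c' ∈ A, l.idxOf c' ≤ l.idxOf c := by
  simp only [vetoedB, decide_eq_true_eq]
  refine forall₂_congr fun c' hc' => ?_
  rw [prefB_iff_idxOf_lt hc (hA c' hc'), not_lt]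
  exact ⟨fun h => (eq_or_ne c' c).elim (fun hc'c => hc'c ▸ le_rfl) h, fun h _ => h⟩

theorem vetoScore_append (P Q : List (ℕ × List C)) (A : Finset C) (c : C) :
    vetoScore (P ++ Q) A c = vetoScore P A c + vetoScore Q A c := by
  simp [vetoScore]

theorem vetoScore_le_sum_weights (P : List (ℕ × List C)) (A : Finset C) (c : C) :
    vetoScore P A c ≤ (P.map Prod.fst).sum := by
  refine List.sum_le_sum fun wb _ => ?_
  split <;> omega

theorem vetoScore_map_const_ballot (W : List (ℕ × List C)) (l : List C) (A : Finset C) (c : C) :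
    vetoScore (W.map fun wb => (wb.1, l)) A c =
      if vetoedB l A c then 0 else (W.map Prod.fst).sum := by
  split <;> simp_all [vetoScore, Function.comp_def]

end Ballots

section EliminationOrder

variable [Fintype C] [DecidableEq C] {e : List C}

theorem mem_survivors_iff (hall : ∀ c : C, c ∈ e) {i : ℕ} {c : C} :
    c ∈ Finset.univ \ (e.take i).toFinset ↔ i ≤ e.idxOf c := by
  simp [List.mem_take_iff_idxOf_lt (hall c)]

theorem vetoedB_reverse_survivors_iff (hnd : e.Nodup) (hall : ∀ c : C, c ∈ e) {i : ℕ}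
    (hi : i < e.length) {c : C} (hc : c ∈ Finset.univ \ (e.take i).toFinset) :
    vetoedB e.reverse (Finset.univ \ (e.take i).toFinset) c = true ↔ c = e[i] := by
  have hidx : e.idxOf e[i] = i := hnd.idxOf_getElem i hi
  rw [mem_survivors_iff hall] at hc
  rw [vetoedB_iff_forall_idxOf_le (List.mem_reverse.2 (hall c))
    fun x _ => List.mem_reverse.2 (hall x)]
  simp only [mem_survivors_iff hall, hnd.idxOf_reverse_le_iff (hall _) (hall c)]
  constructor
  · intro h
    rw [← List.idxOf_inj (hall c)]
    have := h e[i] hidx.ge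
    omega
  · rintro rfl c' hc'
    omega

end EliminationOrder

theorem eliminateVeto_toptruncated_general [Fintype C] [DecidableEq C]
    (S W : List (ℕ × List C)) (e : List C)
    (h : IsElimOrder (S ++ W) e) :
    IsElimOrder (S ++ W.map (fun wb => (wb.1, e.reverse))) e := by
  obtain ⟨hnd, hall, hmin⟩ := h
  refine ⟨hnd, hall, fun i hi c hc => ?_⟩
  simp only [List.get_eq_getElem] at hmin ⊢
  set A := Finset.univ \ (e.take i).toFinset
  have hvetoed : ∀ x ∈ A, vetoedB e.reverse A x = true ↔ x = e[i] :=
    fun x hx => vetoedB_reverse_survivors_iff hnd hall hi hx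
  have hciA : e[i] ∈ A := (mem_survivors_iff hall).2 (hnd.idxOf_getElem i hi).ge
  have hvetoed_ci : vetoedB e.reverse A e[i] = true := (hvetoed _ hciA).2 rfl
  have hmin_i : vetoScore S A e[i] + vetoScore W A e[i] ≤ vetoScore S A c + vetoScore W A c := by
    simpa only [vetoScore_append] using hmin i hi c hc
  rw [vetoScore_append, vetoScore_append, vetoScore_map_const_ballot,
    vetoScore_map_const_ballot, if_pos hvetoed_ci]
  by_cases hci : c = e[i]
  · rw [hci, if_pos hvetoed_ci]
  · calc vetoScore S A e[i] + 0 ≤ vetoScore S A e[i] + vetoScore W A e[i] := by omega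
      _ ≤ vetoScore S A c + vetoScore W A c := hmin_i
      _ ≤ vetoScore S A c + (W.map Prod.fst).sum :=
        Nat.add_le_add_left (vetoScore_le_sum_weights W A c) _
      _ = _ := by rw [if_neg (mt (hvetoed c hc).1 hci)]

/-- In eliminate(veto), if the top-truncated manipulator ballots `W` together with the
non-manipulators `S` produce the elimination order `e = (c₁, …, c_m = p)`, then replacing
every ballot in `W` by the complete ballot `c_m ≻ c_{m-1} ≻ ⋯ ≻ c₁` (i.e. `e.reverse`)
produces the same elimination order; hence any constructive manipulation achievable with
top-truncated ballots is achievable with complete ballots. -/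
theorem eliminateVeto_toptruncated [Fintype C] [DecidableEq C]
    (S W : List (ℕ × List C)) (e : List C) (p : C)
    (hW : ∀ wb ∈ W, wb.2.Nodup)
    (hp : e.getLast? = some p)
    (h : IsElimOrder (S ++ W) e) :
    IsElimOrder (S ++ W.map (fun wb => (wb.1, e.reverse))) e :=
  eliminateVeto_toptruncated_general S W e h
end

section
/- Let W be a finite set of weighted top-truncated ballots over candidates C, |C| = m, each ballot ranking some prefix of candidates. Under the round-up evaluation (ranked position i gives α_i, unranked gives α_m) of a scoring rule α₁ ≥ ... ≥ α_m, the ballot (p) alone maximizes p's score among all top-truncated ballots, and simultaneously minimizes every other candidate's score. Hence p can be made a co-winner by the manipulators iff all manipulators casting (p) makes p a co-winner. -/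
/-!
On the ballot `(p)`, `p` gets `α 0`, the largest score, and every other candidate gets
`α (m - 1)`, the smallest one, since a ballot of length at most `m` ranks nobody below
position `m - 1`. So replacing every manipulator's ballot by `(p)` can only widen `p`'s
lead over each rival.
-/

variable {C : Type*}

/-- Round-up score of candidate `c` from one top-truncated ballot `l` under the scoring
vector `α` (for `m` candidates): ranked position `i` (0-indexed) gives `α i`, and
unranked candidates get `α (m - 1)`. -/
def ruBallotScore [DecidableEq C] (α : ℕ → ℝ) (m : ℕ) (l : List C) (c : C) : ℝ :=
  if c ∈ l then α (l.idxOf c) else α (m - 1)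

/-- Total round-up score of `c`: the non-manipulators `S` plus manipulators of weights
`w` casting the ballots `b`. -/
def ruScore [Fintype C] [DecidableEq C] (α : ℕ → ℝ) (S : List (ℕ × List C))
    {n : ℕ} (w : Fin n → ℕ) (b : Fin n → List C) (c : C) : ℝ :=
  (S.map fun wb => (wb.1 : ℝ) * ruBallotScore α (Fintype.card C) wb.2 c).sum +
    ∑ i, (w i : ℝ) * ruBallotScore α (Fintype.card C) (b i) c

section BallotScore

variable [DecidableEq C] {α : ℕ → ℝ} {m : ℕ}

theorem ruBallotScore_singleton_self (p : C) : ruBallotScore α m [p] p = α 0 := by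
  simp [ruBallotScore]

theorem ruBallotScore_singleton_of_ne {p c : C} (h : c ≠ p) :
    ruBallotScore α m [p] c = α (m - 1) := by
  simp [ruBallotScore, h]

theorem ruBallotScore_le_singleton_self (hα : Antitone α) (l : List C) (p : C) :
    ruBallotScore α m l p ≤ ruBallotScore α m [p] p := by
  rw [ruBallotScore_singleton_self, ruBallotScore]
  split <;> exact hα (Nat.zero_le _)

theorem ruBallotScore_singleton_le_of_ne (hα : Antitone α) {l : List C} (hl : l.length ≤ m)
    {p c : C} (h : c ≠ p) : ruBallotScore α m [p] c ≤ ruBallotScore α m l c := by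
  rw [ruBallotScore_singleton_of_ne h, ruBallotScore]
  split
  case isTrue hc =>
    have := List.idxOf_lt_length_iff.mpr hc
    exact hα (by omega)
  case isFalse => exact le_rfl

end BallotScore

theorem ruScore_le_ruScore [Fintype C] [DecidableEq C] {α : ℕ → ℝ} (S : List (ℕ × List C))
    {n : ℕ} (w : Fin n → ℕ) {b b' : Fin n → List C} {c : C}
    (h : ∀ i, ruBallotScore α (Fintype.card C) (b i) c ≤
      ruBallotScore α (Fintype.card C) (b' i) c) :
    ruScore α S w b c ≤ ruScore α S w b' c :=
  add_le_add le_rfl <| Finset.sum_le_sum fun i _ =>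
    mul_le_mul_of_nonneg_left (h i) (Nat.cast_nonneg _)

/-- For a scoring rule with round-up evaluation: among all top-truncated ballots,
the ballot `(p)` maximizes `p`'s score and minimizes every other candidate's score;
hence `p` can be made a co-winner by the manipulators iff all manipulators casting
`(p)` makes `p` a co-winner. -/
theorem roundUp_plurality_like [Fintype C] [DecidableEq C]
    (α : ℕ → ℝ) (hα : Antitone α) (p : C)
    (S : List (ℕ × List C)) (n : ℕ) (w : Fin n → ℕ) :
    (∀ l : List C, l.Nodup → l.length ≤ Fintype.card C →
      ruBallotScore α (Fintype.card C) l p ≤ ruBallotScore α (Fintype.card C) [p] p ∧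
      ∀ c, c ≠ p →
        ruBallotScore α (Fintype.card C) [p] c ≤ ruBallotScore α (Fintype.card C) l c) ∧
    ((∃ b : Fin n → List C,
        (∀ i, (b i).Nodup ∧ (b i).length ≤ Fintype.card C) ∧
        ∀ c, ruScore α S w b c ≤ ruScore α S w b p) ↔
      (∀ c, ruScore α S w (fun _ => [p]) c ≤ ruScore α S w (fun _ => [p]) p)) := by
  refine ⟨fun l _ hl => ⟨ruBallotScore_le_singleton_self hα l p,
    fun c hc => ruBallotScore_singleton_le_of_ne hα hl hc⟩, ⟨?_, ?_⟩⟩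
  · rintro ⟨b, hb, hwin⟩ c
    obtain rfl | hc := eq_or_ne c p
    · exact le_rfl
    calc ruScore α S w (fun _ => [p]) c
        ≤ ruScore α S w b c :=
          ruScore_le_ruScore S w fun i => ruBallotScore_singleton_le_of_ne hα (hb i).2 hc
      _ ≤ ruScore α S w b p := hwin c
      _ ≤ ruScore α S w (fun _ => [p]) p :=
          ruScore_le_ruScore S w fun i => ruBallotScore_le_singleton_self hα (b i) p
  · intro hwin
    exact ⟨fun _ => [p], fun _ => ⟨List.nodup_singleton p, Fintype.card_pos_iff.mpr ⟨p⟩⟩, hwin⟩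
end
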